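/- Suppose the images π(x_i), i ∈ I, are pairwise distinct in T^n, and define deg on X(F^•)_0 by assigning to the 0-simplex [x_i] mod ℤ^n the integer deg(i). Then X = X(F^•) satisfies: (1) an edge [x,y] mod ℤ^n belongs to X_1 if and only if for some k there exist x_0 = x, x_1, …, x_k = y ∈ ℝ^n with [x_i] mod ℤ^n ∈ X_0 for all i and, for each 1 ≤ i ≤ k, [x_{i−1}, x_i] mod ℤ^n ∈ X_1 of degree one (meaning deg([x_i] mod ℤ^n) − deg([x_{i−1}] mod ℤ^n) = 1); and (2) for k > 1, a k-simplex [x_0, …, x_k] mod ℤ^n belongs to X_k if and only if [x_i] mod ℤ^n ∈ X_0 for all 0 ≤ i ≤ k and [x_{i−1}, x_i] mod ℤ^n ∈ X_1 for all 1 ≤ i ≤ k. -/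

import Mathlib

open scoped BigOperators
open MeasureTheory

noncomputable section

/-- `ℤ^n`, the exponent lattice. -/
abbrev Zn (n : ℕ) : Type := Fin n → ℤ

/-- `ℝ^n`. -/
abbrev Rn (n : ℕ) : Type := Fin n → ℝ

/-- The Laurent polynomial ring `R_n = ℂ[z_1^{±1},…,z_n^{±1}]`, realized as the group
algebra of `ℤ^n` over `ℂ`. -/
abbrev LaurentRing (n : ℕ) : Type := AddMonoidAlgebra ℂ (Zn n)

/-- The embedding `ℤ^n → ℝ^n`. -/
def zToR {n : ℕ} (m : Zn n) : Rn n := fun j => (m j : ℝ)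

/-- A bounded based sequence `F^•` of finite-rank free `R_n`-modules: a finite index set
`I = ⊔_k I_k` (with `I_k = ∅` for `k > 0` and `I_0 ≠ ∅`), recorded via a degree function,
together with the matrix entries `d^k_{ij} ∈ R_n` of the maps `F^k → F^{k+1}`. -/
structure BasedSeq (n : ℕ) where
  I : Type
  fintypeI : Fintype I
  deg : I → ℤ
  deg_nonpos : ∀ i, deg i ≤ 0
  exists_deg_zero : ∃ i, deg i = 0
  d : I → I → LaurentRing n
  d_eq_zero : ∀ i j, deg i ≠ deg j + 1 → d i j = 0

attribute [instance] BasedSeq.fintypeI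

/-- Chains witnessing membership in `E_{ij}`: `EChain F i j m` holds iff there is a chain
`j = i_0, i_1, …, i_k = i` with `deg i_ℓ = deg i_{ℓ-1} + 1` at each step, exponents
`m_ℓ` in the support of the corresponding matrix entry, and `m = m_1 + ⋯ + m_k`. -/
inductive EChain {n : ℕ} (F : BasedSeq n) : F.I → F.I → Zn n → Prop where
  | base {i j : F.I} {m : Zn n} :
      F.deg i = F.deg j + 1 → m ∈ (F.d i j).coeff.support → EChain F i j m
  | step {i j k : F.I} {m m' : Zn n} :
      EChain F j k m → F.deg i = F.deg j + 1 → m' ∈ (F.d i j).coeff.support →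
      EChain F i k (m + m')

/-- The subset `E_{ij} ⊆ ℤ^n`. -/
def Eset {n : ℕ} (F : BasedSeq n) (i j : F.I) : Set (Zn n) := {m | EChain F i j m}

/-- The condition `(m_1, …, m_k) ∈ E_{i_1 i_0} × ⋯ × E_{i_k i_{k-1}}`. -/
def goodTuple {n : ℕ} (F : BasedSeq n) {k : ℕ} (c : Fin (k + 1) → F.I)
    (m : Fin k → Zn n) : Prop :=
  ∀ ℓ : Fin k, m ℓ ∈ Eset F (c ℓ.succ) (c ℓ.castSucc)

/-- The vertex tuple `(x_{i_0}, x_{i_1}+m_1, …, x_{i_k}+m_1+⋯+m_k)` in `ℝ^n`. -/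
def vtx {n : ℕ} (F : BasedSeq n) (x : F.I → Rn n) {k : ℕ}
    (c : Fin (k + 1) → F.I) (m : Fin k → Zn n) : Fin (k + 1) → Rn n :=
  fun a => x (c a) + zToR (∑ ℓ ∈ Finset.univ.filter (fun ℓ : Fin k => (ℓ : ℕ) < (a : ℕ)), m ℓ)

/-- Membership in `X(F^•)_k`: the tuple `y` represents (mod a common `ℤ^n`-translation `t`)
one of the linear `k`-simplices `[x_{i_0}, x_{i_1}+m_1, …, x_{i_k}+m_1+⋯+m_k] mod ℤ^n`. -/
def InX {n : ℕ} (F : BasedSeq n) (x : F.I → Rn n) (k : ℕ)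
    (y : Fin (k + 1) → Rn n) : Prop :=
  ∃ (c : Fin (k + 1) → F.I) (m : Fin k → Zn n) (t : Zn n),
    goodTuple F c m ∧ ∀ a, y a = vtx F x c m a + zToR t

/-- The integer lattice `ℤ^n ⊆ ℝ^n` as an additive subgroup. -/
def intLattice (n : ℕ) : AddSubgroup (Rn n) :=
  AddSubgroup.pi Set.univ fun _ => AddSubgroup.zmultiples (1 : ℝ)

/-- The torus `T^n = ℝ^n/ℤ^n`. -/
abbrev Torus (n : ℕ) := Rn n ⧸ intLattice n

/-- The projection `π : ℝ^n → T^n`. -/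
def toTorus {n : ℕ} : Rn n → Torus n := QuotientAddGroup.mk

/-- The tropical Lagrangian coamoeba `T(F^•) ⊆ T^n`. -/
def TropT {n : ℕ} (F : BasedSeq n) (x : F.I → Rn n) : Set (Torus n) :=
  ⋃ (k : ℕ), ⋃ (c : Fin (k + 1) → F.I), ⋃ (m : Fin k → Zn n), ⋃ (_ : goodTuple F c m),
    toTorus '' convexHull ℝ (Set.range (vtx F x c m))

/-- The subset `S_i ⊆ ℝ^n`. -/
def Sset {n : ℕ} (F : BasedSeq n) (x : F.I → Rn n) (i : F.I) : Set (Rn n) :=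
  ⋃ (k : ℕ), ⋃ (c : Fin (k + 1) → F.I), ⋃ (m : Fin k → Zn n),
    ⋃ (_ : c 0 = i ∧ goodTuple F c m), convexHull ℝ (Set.range (vtx F x c m))

/-- `[x, S] = {t·x + (1−t)·y : y ∈ S, t ∈ [0,1]}`. -/
def joinSet {n : ℕ} (x : Rn n) (S : Set (Rn n)) : Set (Rn n) :=
  {p | ∃ y ∈ S, ∃ t ∈ Set.Icc (0 : ℝ) 1, p = t • x + (1 - t) • y}

/-!
The hypothesis on the `x_i` says that a lift `x_i + t` (`t ∈ ℤ^n`) of a vertex of `X_0`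
determines both `i` and `t`. Hence an edge of `X_1` from `x_i + t` is the same thing as an
element `μ ∈ E_{ji}` together with its endpoint `x_j + μ + t`. Since `E` is defined by chains
of degree-one steps, these exponents compose along paths and decompose into degree-one
edges, which is (1). For (2), the lifts `x_{i_a} + t_a` of the vertices of a simplex all of
whose consecutive edges lie in `X_1` give exponents `t_{a+1} - t_a ∈ E_{i_{a+1} i_a}`, whose
partial sums telescope back to `t_a - t_0`.
-/

variable {n : ℕ}

lemma zToR_add (a b : Zn n) : zToR (a + b) = zToR a + zToR b := by
  funext j; simp [zToR]

lemma zToR_sub (a b : Zn n) : zToR (a - b) = zToR a - zToR b := by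
  funext j; simp [zToR]

@[simp]
lemma zToR_zero : zToR (0 : Zn n) = 0 := by
  funext j; simp [zToR]

lemma zToR_injective : Function.Injective (zToR (n := n)) := fun a b h => by
  funext j; simpa [zToR] using congrFun h j

lemma EChain.trans {F : BasedSeq n} {i j k : F.I} {m m' : Zn n}
    (h₁ : EChain F i j m) (h₂ : EChain F k i m') : EChain F k j (m + m') := by
  induction h₂ with
  | base hd hm => exact .step h₁ hd hm
  | step _ hd hm ih => rw [← add_assoc]; exact .step (ih h₁) hd hm

lemma Fin.sum_filter_val_lt_eq_partialSum {M : Type*} [AddCommMonoid M] {k : ℕ}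
    (m : Fin k → M) (a : Fin (k + 1)) :
    ∑ ℓ ∈ Finset.univ.filter (fun ℓ : Fin k => (ℓ : ℕ) < (a : ℕ)), m ℓ = Fin.partialSum m a := by
  induction a using Fin.induction with
  | zero => simp
  | succ a ih =>
    have hfilter : Finset.univ.filter (fun ℓ : Fin k => (ℓ : ℕ) < (a.succ : ℕ)) =
        insert a (Finset.univ.filter (fun ℓ : Fin k => (ℓ : ℕ) < (a.castSucc : ℕ))) := by
      ext ℓ
      simp only [Finset.mem_filter, Finset.mem_univ, true_and, Finset.mem_insert, Fin.val_succ,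
        Fin.val_castSucc, Fin.ext_iff]
      omega
    rw [hfilter, Finset.sum_insert (by simp), ih, Fin.partialSum_succ, add_comm]

lemma vtx_apply (F : BasedSeq n) (x : F.I → Rn n) {k : ℕ} (c : Fin (k + 1) → F.I)
    (m : Fin k → Zn n) (a : Fin (k + 1)) :
    vtx F x c m a = x (c a) + zToR (Fin.partialSum m a) := by
  rw [vtx, Fin.sum_filter_val_lt_eq_partialSum]

lemma Fin.partialSum_one {M : Type*} [AddCommMonoid M] (m : Fin 1 → M) :
    Fin.partialSum m 1 = m 0 := by
  simpa using Fin.partialSum_succ m 0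

/-- The points `x_i` have pairwise distinct images in the torus `ℝ^n / ℤ^n`. -/
def DistinctModLattice {ι : Type*} (x : ι → Rn n) : Prop :=
  ∀ i j (t : Zn n), x i = x j + zToR t → i = j

lemma DistinctModLattice.eq_and_eq {ι : Type*} {x : ι → Rn n} (hx : DistinctModLattice x)
    {i j : ι} {t s : Zn n} (h : x i + zToR t = x j + zToR s) : i = j ∧ t = s := by
  obtain rfl : i = j := hx i j (s - t) (by rw [zToR_sub, ← add_sub_assoc, ← h]; abel)
  exact ⟨rfl, zToR_injective (add_left_cancel h)⟩

section InX

variable {F : BasedSeq n} {x : F.I → Rn n}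

lemma inX_zero_iff {p : Rn n} : InX F x 0 ![p] ↔ ∃ (i : F.I) (t : Zn n), p = x i + zToR t := by
  constructor
  · rintro ⟨c, m, t, -, h⟩
    exact ⟨c 0, t, by simpa [vtx_apply] using h 0⟩
  · rintro ⟨i, t, rfl⟩
    refine ⟨fun _ => i, fun ℓ => ℓ.elim0, t, fun ℓ => ℓ.elim0, fun a => ?_⟩
    fin_cases a
    simp [vtx_apply]

lemma inX_one_iff {p q : Rn n} :
    InX F x 1 ![p, q] ↔ ∃ (i j : F.I) (μ t : Zn n),
      EChain F j i μ ∧ p = x i + zToR t ∧ q = x j + zToR (μ + t) := by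
  constructor
  · rintro ⟨c, m, t, hm, h⟩
    refine ⟨c 0, c 1, m 0, t, hm 0, by simpa [vtx_apply] using h 0, ?_⟩
    simpa [vtx_apply, Fin.partialSum_one, zToR_add, add_assoc] using h 1
  · rintro ⟨i, j, μ, t, hμ, rfl, rfl⟩
    refine ⟨![i, j], fun _ => μ, t, fun ℓ => ?_, Fin.forall_fin_two.2 ⟨?_, ?_⟩⟩
    · fin_cases ℓ
      exact hμ
    · simp [vtx_apply]
    · simp [vtx_apply, Fin.partialSum_one, zToR_add, add_assoc]

lemma InX.vertex {k : ℕ} {y : Fin (k + 1) → Rn n} (h : InX F x k y) (a : Fin (k + 1)) :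
    InX F x 0 ![y a] := by
  obtain ⟨c, m, t, -, hy⟩ := h
  exact inX_zero_iff.2 ⟨c a, Fin.partialSum m a + t, by rw [hy, vtx_apply, zToR_add, add_assoc]⟩

lemma InX.edge {k : ℕ} {y : Fin (k + 2) → Rn n} (h : InX F x (k + 1) y) (a : Fin (k + 1)) :
    InX F x 1 ![y a.castSucc, y a.succ] := by
  obtain ⟨c, m, t, hm, hy⟩ := h
  refine inX_one_iff.2 ⟨c a.castSucc, c a.succ, m a, Fin.partialSum m a.castSucc + t, hm a,
    by rw [hy, vtx_apply, zToR_add, add_assoc], ?_⟩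
  rw [hy, vtx_apply, Fin.partialSum_succ, zToR_add, zToR_add, zToR_add]
  abel

lemma inX_one_trans (hx : DistinctModLattice x) {p q r : Rn n}
    (hpq : InX F x 1 ![p, q]) (hqr : InX F x 1 ![q, r]) : InX F x 1 ![p, r] := by
  obtain ⟨i, j, μ, t, hμ, rfl, hq⟩ := inX_one_iff.1 hpq
  obtain ⟨j', l, ν, s, hν, hq', rfl⟩ := inX_one_iff.1 hqr
  obtain ⟨rfl, rfl⟩ := hx.eq_and_eq (hq.symm.trans hq')
  exact inX_one_iff.2 ⟨i, l, μ + ν, t, hμ.trans hν, rfl, by rw [add_comm μ ν, add_assoc]⟩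

lemma inX_one_of_chain (hx : DistinctModLattice x) :
    ∀ {k : ℕ} (c : Fin (k + 2) → Rn n), (∀ a : Fin (k + 1), InX F x 1 ![c a.castSucc, c a.succ]) →
      InX F x 1 ![c 0, c (Fin.last (k + 1))]
  | 0, c, h => h 0
  | k + 1, c, h => by
    have hinit : InX F x 1 ![c 0, c (Fin.last (k + 1)).castSucc] :=
      inX_one_of_chain hx (fun b => c b.castSucc) fun a => by
        simpa only [Fin.succ_castSucc] using h a.castSucc
    exact inX_one_trans hx hinit (by simpa only [Fin.succ_last] using h (Fin.last (k + 1)))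

def IsDegOnePath (F : BasedSeq n) (x : F.I → Rn n) {k : ℕ} (c : Fin (k + 2) → Rn n) : Prop :=
  (∀ a, InX F x 0 ![c a]) ∧
    ∀ a : Fin (k + 1), InX F x 1 ![c a.castSucc, c a.succ] ∧
      ∃ (i j : F.I) (t t' : Zn n), c a.castSucc = x j + zToR t ∧
        c a.succ = x i + zToR t' ∧ F.deg i = F.deg j + 1

lemma IsDegOnePath.snoc {k : ℕ} {c : Fin (k + 2) → Rn n} (hc : IsDegOnePath F x c) {i j : F.I}
    {μ t : Zn n} (hd : F.deg j = F.deg i + 1) (hμ : μ ∈ (F.d j i).coeff.support)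
    (hlast : c (Fin.last (k + 1)) = x i + zToR t) :
    IsDegOnePath F x (Fin.snoc c (x j + zToR (μ + t)) : Fin (k + 3) → Rn n) := by
  constructor
  · intro a
    refine Fin.lastCases ?_ (fun b => ?_) a
    · simpa only [Fin.snoc_last] using inX_zero_iff.2 ⟨j, μ + t, rfl⟩
    · simpa only [Fin.snoc_castSucc] using hc.1 b
  · intro a
    refine Fin.lastCases ?_ (fun b => ?_) a
    · simp only [Fin.succ_last, Fin.snoc_castSucc, Fin.snoc_last]
      exact ⟨inX_one_iff.2 ⟨i, j, μ, t, .base hd hμ, hlast, rfl⟩, j, i, t, μ + t, hlast, rfl, hd⟩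
    · simpa only [Fin.succ_castSucc, Fin.snoc_castSucc] using hc.2 b

lemma EChain.exists_isDegOnePath {i j : F.I} {μ : Zn n} (h : EChain F j i μ) (t : Zn n) :
    ∃ (k : ℕ) (c : Fin (k + 2) → Rn n), c 0 = x i + zToR t ∧
      c (Fin.last (k + 1)) = x j + zToR (μ + t) ∧ IsDegOnePath F x c := by
  induction h with
  | @base j i μ hd hμ =>
    refine ⟨0, ![x i + zToR t, x j + zToR (μ + t)], rfl, rfl, ?_, fun a => ?_⟩
    · intro a
      fin_cases a
      exacts [inX_zero_iff.2 ⟨i, t, rfl⟩, inX_zero_iff.2 ⟨j, μ + t, rfl⟩]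
    · fin_cases a
      exact ⟨inX_one_iff.2 ⟨i, j, μ, t, .base hd hμ, rfl, rfl⟩, j, i, t, μ + t, rfl, rfl, hd⟩
  | @step l j i μ ν _ hd hν ih =>
    obtain ⟨k, c, hfirst, hlast, hc⟩ := ih
    refine ⟨k + 1, Fin.snoc c (x l + zToR (ν + (μ + t))), ?_, ?_, hc.snoc hd hν hlast⟩
    · simpa only [← Fin.castSucc_zero, Fin.snoc_castSucc] using hfirst
    · rw [Fin.snoc_last, add_left_comm, add_assoc]

theorem inX_one_iff_exists_isDegOnePath (hx : DistinctModLattice x) {p q : Rn n} :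
    InX F x 1 ![p, q] ↔ ∃ (k : ℕ) (c : Fin (k + 2) → Rn n),
      c 0 = p ∧ c (Fin.last (k + 1)) = q ∧ IsDegOnePath F x c := by
  constructor
  · intro h
    obtain ⟨i, j, μ, t, hμ, rfl, rfl⟩ := inX_one_iff.1 h
    exact hμ.exists_isDegOnePath t
  · rintro ⟨k, c, rfl, rfl, hc⟩
    exact inX_one_of_chain hx c fun a => (hc.2 a).1

lemma inX_of_forall_inX_edge (hx : DistinctModLattice x) {k : ℕ} {y : Fin (k + 2) → Rn n}
    (hv : ∀ a, InX F x 0 ![y a]) (he : ∀ a : Fin (k + 1), InX F x 1 ![y a.castSucc, y a.succ]) :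
    InX F x (k + 1) y := by
  choose i t ht using fun a => inX_zero_iff.1 (hv a)
  have hstep : ∀ a : Fin (k + 1),
      EChain F (i a.succ) (i a.castSucc) (-t a.castSucc + t a.succ) := by
    intro a
    obtain ⟨j, j', μ, s, hμ, h₁, h₂⟩ := inX_one_iff.1 (he a)
    obtain ⟨rfl, rfl⟩ := hx.eq_and_eq ((ht a.castSucc).symm.trans h₁)
    obtain ⟨rfl, hs⟩ := hx.eq_and_eq ((ht a.succ).symm.trans h₂)
    rwa [hs, add_comm μ, neg_add_cancel_left]
  refine ⟨i, _, t 0, hstep, fun a => ?_⟩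
  rw [ht a, vtx_apply, add_assoc, ← zToR_add, add_comm _ (t 0)]
  exact congrArg (fun s => x (i a) + zToR s) (congrFun (Fin.partialSum_left_neg t) a).symm

theorem inX_succ_iff (hx : DistinctModLattice x) {k : ℕ} {y : Fin (k + 2) → Rn n} :
    InX F x (k + 1) y ↔
      (∀ a, InX F x 0 ![y a]) ∧ ∀ a : Fin (k + 1), InX F x 1 ![y a.castSucc, y a.succ] :=
  ⟨fun h => ⟨h.vertex, h.edge⟩, fun h => inX_of_forall_inX_edge hx h.1 h.2⟩

end InX

theorem stmt6_general (n : ℕ) (F : BasedSeq n) (x : F.I → Rn n)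
    (hdist : ∀ (i j : F.I) (t : Zn n), x i = x j + zToR t → i = j) :
    (∀ p q : Rn n, InX F x 1 ![p, q] ↔
      ∃ (k : ℕ) (c : Fin (k + 2) → Rn n), c 0 = p ∧ c (Fin.last (k + 1)) = q ∧
        (∀ a, InX F x 0 ![c a]) ∧
        ∀ a : Fin (k + 1), InX F x 1 ![c a.castSucc, c a.succ] ∧
          ∃ (i j : F.I) (t t' : Zn n), c a.castSucc = x j + zToR t ∧
            c a.succ = x i + zToR t' ∧ F.deg i = F.deg j + 1) ∧
    (∀ (k : ℕ) (y : Fin (k + 3) → Rn n), InX F x (k + 2) y ↔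
      (∀ a, InX F x 0 ![y a]) ∧
        ∀ a : Fin (k + 2), InX F x 1 ![y a.castSucc, y a.succ]) :=
  ⟨fun _ _ => inX_one_iff_exists_isDegOnePath hdist, fun _ _ => inX_succ_iff hdist⟩

/-- if the `π(x_i)` are pairwise distinct then `X(F^•)` satisfies the
generating conditions (1) and (2): edges are generated by degree-one edges, and higher
simplices by vertices and edges. -/
theorem stmt6 (n : ℕ) (hn : 1 ≤ n) (F : BasedSeq n) (x : F.I → Rn n)
    (hdist : ∀ (i j : F.I) (t : Zn n), x i = x j + zToR t → i = j) :
    (∀ p q : Rn n, InX F x 1 ![p, q] ↔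
      ∃ (k : ℕ) (c : Fin (k + 2) → Rn n), c 0 = p ∧ c (Fin.last (k + 1)) = q ∧
        (∀ a, InX F x 0 ![c a]) ∧
        ∀ a : Fin (k + 1), InX F x 1 ![c a.castSucc, c a.succ] ∧
          ∃ (i j : F.I) (t t' : Zn n), c a.castSucc = x j + zToR t ∧
            c a.succ = x i + zToR t' ∧ F.deg i = F.deg j + 1) ∧
    (∀ (k : ℕ) (y : Fin (k + 3) → Rn n), InX F x (k + 2) y ↔
      (∀ a, InX F x 0 ![y a]) ∧
        ∀ a : Fin (k + 2), InX F x 1 ![y a.castSucc, y a.succ]) :=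
  stmt6_general n F x hdist

end
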